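/- Let a, b be rational integers with 2 ≤ a ≤ b−2 and let t, v₂, v₃ be integers with 1 ≤ t ≤ b−a, v₂ > 0 and v₃ ≥ 0. Then β(t,v₂,v₃) = t − (b−a+1)v₂ − (b−a+1)b·v₃ + v₂ρ + v₃ρ² is not totally positive. -/

import Mathlib

open IntermediateField

noncomputable section

/-- An element of a field `K` is totally positive if its image under every
real embedding of `K` is positive. -/
def TotallyPositive {K : Type*} [Field K] (x : K) : Prop :=
  ∀ φ : K →+* ℝ, 0 < φ x

/-- The element `β(t,v₂,v₃) = t − (b−a+1)v₂ − (b−a+1)b·v₃ + v₂ρ + v₃ρ²` of `ℚ(ρ) ⊆ ℝ`. -/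
def betaT (a b : ℤ) (ρ : ℝ) (t v₂ v₃ : ℤ) : ℚ⟮ρ⟯ :=
  ((t - (b - a + 1) * v₂ - (b - a + 1) * b * v₃ : ℤ) : ℚ⟮ρ⟯)
    + ((v₂ : ℤ) : ℚ⟮ρ⟯) * AdjoinSimple.gen ℚ ρ
    + ((v₃ : ℤ) : ℚ⟮ρ⟯) * AdjoinSimple.gen ℚ ρ ^ 2

set_option maxHeartbeats 1000000 in
/-- Let `2 ≤ a ≤ b−2` and `1 ≤ t ≤ b−a`, `v₂ > 0`, `v₃ ≥ 0`. Then
`β(t,v₂,v₃)` is not totally positive. -/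
theorem stmt_10 (a b : ℤ) (ha : 2 ≤ a) (hab : a ≤ b - 2)
    (ρ : ℝ) (hroot : ρ ^ 3 - ((a : ℝ) + (b : ℝ)) * ρ ^ 2 + (a : ℝ) * (b : ℝ) * ρ - 1 = 0)
    (hmax : ∀ x : ℝ, x ^ 3 - ((a : ℝ) + (b : ℝ)) * x ^ 2 + (a : ℝ) * (b : ℝ) * x - 1 = 0 → x ≤ ρ)
    (hdeg : Module.finrank ℚ ℚ⟮ρ⟯ = 3)
    (t v₂ v₃ : ℤ) (ht0 : 1 ≤ t) (ht1 : t ≤ b - a)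
    (hv₂ : 0 < v₂) (hv₃ : 0 ≤ v₃) :
    ¬ TotallyPositive (betaT a b ρ t v₂ v₃) := by
  intro hpos
  have ha' : (2:ℝ) ≤ (a:ℝ) := by exact_mod_cast ha
  have hb' : (4:ℝ) ≤ (b:ℝ) := by
    have : (4:ℤ) ≤ b := by linarith
    exact_mod_cast this
  have hab8 : (8:ℝ) ≤ (a:ℝ) * (b:ℝ) := by nlinarith
  have hba : (2:ℝ) ≤ (b:ℝ) - (a:ℝ) := by
    have : (2:ℤ) ≤ b - a := by linarith
    exact_mod_cast this
  -- the polynomial f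
  set f : Polynomial ℚ := Polynomial.X ^ 3 - Polynomial.C ((a:ℚ) + (b:ℚ)) * Polynomial.X ^ 2
      + Polynomial.C ((a:ℚ) * (b:ℚ)) * Polynomial.X - 1 with hf
  have hfmonic : f.Monic := by unfold f; monicity!
  have hfdeg : f.natDegree = 3 := by unfold f; compute_degree!
  have hfρ : Polynomial.aeval ρ f = 0 := by
    rw [hf]
    simp only [map_add, map_sub, map_mul, map_pow, map_one, Polynomial.aeval_C,
      Polynomial.aeval_X, eq_ratCast]
    push_cast
    linarith [hroot]
  have hint : IsIntegral ℚ ρ := ⟨f, hfmonic, by rwa [← Polynomial.aeval_def]⟩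
  have hmin : minpoly ℚ ρ = f := by
    have hdvd : minpoly ℚ ρ ∣ f := minpoly.dvd ℚ ρ hfρ
    have h3 : (minpoly ℚ ρ).natDegree = 3 := by
      rw [← IntermediateField.adjoin.finrank hint, hdeg]
    exact (Polynomial.eq_of_monic_of_dvd_of_natDegree_le (minpoly.monic hint) hfmonic hdvd
      (by rw [hfdeg, h3])).symm
  -- find a small root y of f
  set c : ℝ := 2 / ((a:ℝ) * (b:ℝ)) with hc
  have habpos : (0:ℝ) < (a:ℝ) * (b:ℝ) := by linarith
  have hc0 : 0 < c := by positivity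
  have hcsmall : c ≤ 1/4 := by
    rw [hc, div_le_div_iff₀ habpos (by norm_num)]
    linarith
  have hgc : (0:ℝ) ≤ c ^ 3 - ((a:ℝ) + (b:ℝ)) * c ^ 2 + (a:ℝ) * (b:ℝ) * c - 1 := by
    have habc : (a:ℝ) * (b:ℝ) * c = 2 := by
      rw [hc]; field_simp
    have h1 : ((a:ℝ) + (b:ℝ)) * c ^ 2 ≤ 1 := by
      have hc2 : c ^ 2 = 4 / ((a:ℝ) * (b:ℝ)) ^ 2 := by
        rw [hc]; field_simp; ring
      rw [hc2]
      have h4 : 4 * ((a:ℝ) + (b:ℝ)) ≤ ((a:ℝ) * (b:ℝ)) ^ 2 := by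
        nlinarith [mul_nonneg (by linarith : (0:ℝ) ≤ (a:ℝ) - 1) (by linarith : (0:ℝ) ≤ (b:ℝ) - 1)]
      have : ((a:ℝ) + (b:ℝ)) * (4 / ((a:ℝ) * (b:ℝ)) ^ 2) = 4 * ((a:ℝ) + (b:ℝ)) / ((a:ℝ) * (b:ℝ)) ^ 2 := by ring
      rw [this, div_le_one (by positivity)]
      exact h4
    nlinarith [pow_nonneg hc0.le 3]
  obtain ⟨y, hyIcc, hyroot⟩ : ∃ y ∈ Set.Icc (0:ℝ) c,
      y ^ 3 - ((a:ℝ) + (b:ℝ)) * y ^ 2 + (a:ℝ) * (b:ℝ) * y - 1 = 0 := by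
    have hcont : ContinuousOn (fun x : ℝ => x ^ 3 - ((a:ℝ) + (b:ℝ)) * x ^ 2
        + (a:ℝ) * (b:ℝ) * x - 1) (Set.Icc 0 c) := by fun_prop
    have := intermediate_value_Icc hc0.le hcont
    have h0 : (0:ℝ) ∈ Set.Icc ((0:ℝ) ^ 3 - ((a:ℝ) + (b:ℝ)) * (0:ℝ) ^ 2
        + (a:ℝ) * (b:ℝ) * 0 - 1) (c ^ 3 - ((a:ℝ) + (b:ℝ)) * c ^ 2 + (a:ℝ) * (b:ℝ) * c - 1) := by
      constructor <;> simp <;> linarith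
    obtain ⟨y, hy, hy0⟩ := this h0
    exact ⟨y, hy, hy0⟩
  -- build the embedding sending the generator to y
  have hyminpoly : Polynomial.aeval y (minpoly ℚ (AdjoinSimple.gen ℚ ρ)) = 0 := by
    have hg : minpoly ℚ (AdjoinSimple.gen ℚ ρ) = minpoly ℚ ρ := IntermediateField.minpoly_gen ℚ ρ
    rw [hg, hmin, hf]
    simp only [map_add, map_sub, map_mul, map_pow, map_one, Polynomial.aeval_C,
      Polynomial.aeval_X, eq_ratCast]
    push_cast
    linarith [hyroot]
  let B := IntermediateField.adjoin.powerBasis hint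
  have hyB : Polynomial.aeval y (minpoly ℚ B.gen) = 0 := by
    rwa [IntermediateField.adjoin.powerBasis_gen]
  let ψ : ℚ⟮ρ⟯ →ₐ[ℚ] ℝ := B.lift y hyB
  have hψgen : ψ (AdjoinSimple.gen ℚ ρ) = y := by
    have := B.lift_gen y hyB
    rwa [IntermediateField.adjoin.powerBasis_gen] at this
  have hφ := hpos ψ.toRingHom
  rw [betaT] at hφ
  simp only [AlgHom.toRingHom_eq_coe, RingHom.coe_coe, map_add, map_mul, map_pow,
    map_intCast, hψgen] at hφ
  -- derive the contradiction numerically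
  have hy0 : (0:ℝ) ≤ y := hyIcc.1
  have hy1 : y ≤ 1/4 := le_trans hyIcc.2 hcsmall
  have ht1' : (t:ℝ) ≤ (b:ℝ) - (a:ℝ) := by exact_mod_cast ht1
  have hv₂' : (1:ℝ) ≤ (v₂:ℝ) := by exact_mod_cast hv₂
  have hv₃' : (0:ℝ) ≤ (v₃:ℝ) := by exact_mod_cast hv₃
  push_cast at hφ
  have hy2 : y ^ 2 ≤ 1 / 16 := by nlinarith
  nlinarith [mul_nonneg (sub_nonneg.2 hv₂') (by linarith : (0:ℝ) ≤ ((b:ℝ) - (a:ℝ) + 1) - y),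
    mul_nonneg hv₃' (by nlinarith : (0:ℝ) ≤ ((b:ℝ) - (a:ℝ) + 1) * (b:ℝ) - y ^ 2)]
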